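/- arXiv:1802.02194 — 3 statements merged into one kernel-verified Lean document; each statement's English description precedes it below -/
import Mathlib

section
/- If G is a finite soluble group, then the length of G equals Ω(|G|), the number of prime divisors of |G| counted with multiplicity. -/
/-- An unrefinable chain of length `t` for a group `G`: an ascending chain of
subgroups from `⊥` to `⊤` in which each term is maximal in the next
(equivalently, `G = G₀ > G₁ > ⋯ > G_t = 1` with each `Gᵢ` maximal in `Gᵢ₋₁`). -/
def IsUnrefinableChain {G : Type*} [Group G] {t : ℕ} (s : Fin (t + 1) → Subgroup G) : Prop :=
  s 0 = ⊥ ∧ s (Fin.last t) = ⊤ ∧ ∀ i : Fin t, s i.castSucc ⋖ s i.succ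

/-- The length `l(G)`: the maximal length of an unrefinable chain. -/
noncomputable def groupLength (G : Type*) [Group G] : ℕ :=
  sSup {t | ∃ s : Fin (t + 1) → Subgroup G, IsUnrefinableChain s}

/-- The depth `λ(G)`: the minimal length of an unrefinable chain. -/
noncomputable def groupDepth (G : Type*) [Group G] : ℕ :=
  sInf {t | ∃ s : Fin (t + 1) → Subgroup G, IsUnrefinableChain s}

/-- The chain difference `cd(G) = l(G) - λ(G)`. -/
noncomputable def chainDiff (G : Type*) [Group G] : ℕ := groupLength G - groupDepth G

/-- A chief series of length `t` for `G`. -/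
def IsChiefSeries {G : Type*} [Group G] {t : ℕ} (s : Fin (t + 1) → Subgroup G) : Prop :=
  s 0 = ⊥ ∧ s (Fin.last t) = ⊤ ∧ (∀ i, (s i).Normal) ∧
    ∀ i : Fin t, s i.castSucc < s i.succ ∧
      ∀ N : Subgroup G, N.Normal → s i.castSucc < N → N < s i.succ → False

/-- The chief length of `G`: the number of factors in a chief series. -/
noncomputable def chiefLength (G : Type*) [Group G] : ℕ :=
  sSup {t | ∃ s : Fin (t + 1) → Subgroup G, IsChiefSeries s}

/-!
Along an unrefinable chain every inclusion is proper, so `Ω` of the order strictly increases at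
each step; hence every unrefinable chain of a finite group has length at most `Ω(|G|)`.
Conversely, a nontrivial finite soluble group has a nontrivial abelian quotient, hence a subgroup
`H` of prime index, which is maximal. By induction on the order, `H` has an unrefinable chain of
length `Ω(|H|) = Ω(|G|) - 1`, and appending `G` gives one of length `Ω(|G|)`.
-/

open ArithmeticFunction Subgroup
open scoped ArithmeticFunction.Omega

theorem ArithmeticFunction.cardFactors_lt_of_dvd_of_ne {m n : ℕ} (hn : n ≠ 0) (hmn : m ∣ n)
    (hne : m ≠ n) : Ω m < Ω n := by
  obtain ⟨c, rfl⟩ := hmn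
  have hm : m ≠ 0 := left_ne_zero_of_mul hn
  have hc : 1 < c := Nat.one_lt_iff_ne_zero_and_ne_one.2
    ⟨right_ne_zero_of_mul hn, by rintro rfl; exact hne (mul_one m).symm⟩
  rw [cardFactors_mul hm (right_ne_zero_of_mul hn)]
  exact Nat.lt_add_of_pos_right (cardFactors_pos_iff_one_lt.2 hc)

section

variable {G : Type*} [Group G]

theorem Subgroup.cardFactors_card_lt_of_lt [Finite G] {H K : Subgroup G} (h : H < K) :
    Ω (Nat.card H) < Ω (Nat.card K) :=
  cardFactors_lt_of_dvd_of_ne Nat.card_pos.ne' (card_dvd_of_le h.le)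
    fun hc => h.ne (eq_of_le_of_card_ge h.le hc.ge)

theorem IsUnrefinableChain.length_le_cardFactors [Finite G] {t : ℕ}
    {s : Fin (t + 1) → Subgroup G} (hs : IsUnrefinableChain s) : t ≤ Ω (Nat.card G) := by
  obtain ⟨-, hlast, hcov⟩ := hs
  have key : ∀ i : Fin (t + 1), (i : ℕ) ≤ Ω (Nat.card (s i)) := by
    refine Fin.induction (Nat.zero_le _) fun i ih => ?_
    have := cardFactors_card_lt_of_lt (hcov i).lt
    simp only [Fin.val_succ, Fin.val_castSucc] at ih ⊢
    omega
  simpa [hlast] using key (Fin.last t)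

theorem Subgroup.covBy_top_of_index_prime {H : Subgroup G} (hp : H.index.Prime) : H ⋖ ⊤ := by
  have : H.FiniteIndex := ⟨hp.ne_zero⟩
  refine ⟨lt_top_iff_ne_top.2 fun h => hp.ne_one (index_eq_one.2 h), fun K hHK hK => ?_⟩
  rcases hp.eq_one_or_self_of_dvd _ (index_dvd_of_le hHK.le) with h | h
  · exact hK.ne (index_eq_one.1 h)
  · exact (index_strictAnti hHK).ne h

theorem Subgroup.map_subtype_covBy_map_subtype {H : Subgroup G} {K L : Subgroup H} (h : K ⋖ L) :
    K.map H.subtype ⋖ L.map H.subtype := by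
  let f : Subgroup H ↪o Subgroup G :=
    OrderEmbedding.ofMapLEIff (map H.subtype) fun _ _ => map_subtype_le_map_subtype
  refine h.image f ⟨?_⟩
  rintro _ - _ ⟨L', rfl⟩ X hX
  refine ⟨X.subgroupOf H, ?_⟩
  change (X.subgroupOf H).map H.subtype = X
  rw [subgroupOf_map_subtype, inf_eq_left]
  exact hX.2.trans (map_subtype_le L')

theorem IsUnrefinableChain.snoc_map_subtype {t : ℕ} {H : Subgroup G} (hH : H ⋖ ⊤)
    {s : Fin (t + 1) → Subgroup H} (hs : IsUnrefinableChain s) :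
    IsUnrefinableChain (Fin.snoc (fun i => (s i).map H.subtype) ⊤ : Fin (t + 2) → Subgroup G) := by
  obtain ⟨h0, hlast, hcov⟩ := hs
  refine ⟨?_, Fin.snoc_last _ _, Fin.lastCases ?_ fun i => ?_⟩
  · rw [← Fin.castSucc_zero, Fin.snoc_castSucc, h0, Subgroup.map_bot]
  · rwa [Fin.succ_last, Fin.snoc_last, Fin.snoc_castSucc, hlast, ← MonoidHom.range_eq_map,
      range_subtype]
  · rw [Fin.succ_castSucc, Fin.snoc_castSucc, Fin.snoc_castSucc]
    exact map_subtype_covBy_map_subtype (hcov i)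

theorem QuotientGroup.isSimpleGroup_of_isCoatom {N : Subgroup G} [N.Normal] (hN : IsCoatom N) :
    IsSimpleGroup (G ⧸ N) := by
  have : Nontrivial (G ⧸ N) := QuotientGroup.nontrivial_iff.2 hN.ne_top
  refine ⟨fun K _ => ?_⟩
  have hsurj := QuotientGroup.mk'_surjective N
  rcases hN.le_iff.1 (le_comap_mk' N K) with h | h
  · right
    rw [← map_comap_eq_self_of_surjective hsurj K, h, map_top_of_surjective _ hsurj]
  · left
    rw [← map_comap_eq_self_of_surjective hsurj K, h, QuotientGroup.map_mk'_self]

end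

theorem Subgroup.index_prime_of_isCoatom {C : Type*} [CommGroup C] {M : Subgroup C}
    (hM : IsCoatom M) : M.index.Prime :=
  have := QuotientGroup.isSimpleGroup_of_isCoatom hM
  IsSimpleGroup.prime_card

theorem exists_index_prime_of_isSolvable (G : Type*) [Group G] [Finite G] [Group.IsSolvable G]
    [Nontrivial G] : ∃ H : Subgroup G, H.index.Prime := by
  have : Nontrivial (Abelianization G) :=
    QuotientGroup.nontrivial_iff.2 (Group.IsSolvable.commutator_lt_top_of_nontrivial G).ne
  obtain ⟨M, hM, -⟩ := (eq_top_or_exists_le_coatom (⊥ : Subgroup (Abelianization G))).resolve_left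
    bot_ne_top
  exact ⟨M.comap Abelianization.of, by
    rw [index_comap_of_surjective _ (QuotientGroup.mk_surjective (s := commutator G))]
    exact index_prime_of_isCoatom hM⟩

theorem exists_isUnrefinableChain_of_isSolvable (G : Type*) [Group G] [Finite G]
    [Group.IsSolvable G] : ∃ s : Fin (Ω (Nat.card G) + 1) → Subgroup G, IsUnrefinableChain s := by
  induction hn : Nat.card G using Nat.strong_induction_on generalizing G with
  | _ n ih =>
  subst hn
  rcases subsingleton_or_nontrivial G with hG | hG
  · rw [Nat.card_unique, cardFactors_one]
    exact ⟨fun _ => ⊥, rfl, Subsingleton.elim _ _, Fin.elim0⟩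
  · obtain ⟨H, hH⟩ := exists_index_prime_of_isSolvable G
    have hcard : Nat.card G = Nat.card H * H.index := H.card_mul_index.symm
    have hlt : Nat.card H < Nat.card G := by
      rw [hcard]
      exact lt_mul_of_one_lt_right Nat.card_pos hH.one_lt
    obtain ⟨s, hs⟩ := ih _ hlt H rfl
    rw [hcard, cardFactors_mul Nat.card_pos.ne' hH.ne_zero, cardFactors_apply_prime hH]
    exact ⟨_, hs.snoc_map_subtype (covBy_top_of_index_prime hH)⟩

/-- a finite soluble group has length `Ω(|G|)`. -/
theorem length_eq_card_factors_of_solvable (G : Type*) [Group G] [Finite G] [Group.IsSolvable G] :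
    groupLength G = (Nat.card G).primeFactorsList.length := by
  obtain ⟨s, hs⟩ := exists_isUnrefinableChain_of_isSolvable G
  rw [← cardFactors_apply]
  exact IsGreatest.csSup_eq ⟨⟨s, hs⟩, fun t ⟨_, ht⟩ => ht.length_le_cardFactors⟩
end

section
/- If G is a finite group and N is a normal subgroup of G, then the depth of G/N is at most the depth of G, and the depth of G is at most the depth of N plus the depth of G/N. -/
/-!
Unrefinable chains of `G` are `⋖`-series from `⊥` to `⊤` in the subgroup lattice. Pushing such a
series forward along `G → G ⧸ N` turns each covering step into a covering step or an equality, so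
after deleting repetitions it becomes an unrefinable chain of `G ⧸ N` that is no longer. For the
second inequality, a shortest chain of `N` (viewed in `G`, ending at `N`) followed by the preimage
of a shortest chain of `G ⧸ N` (starting at `N`) is an unrefinable chain of `G`, since both
embeddings of subgroup lattices are onto intervals and so preserve covering.
-/

namespace RelSeries

variable {α : Type*} {r : SetRel α α}

theorem exists_length_le_of_eq_or_rel (p : RelSeries {(a, b) : α × α | a = b ∨ (a, b) ∈ r}) :
    ∃ q : RelSeries r, q.head = p.head ∧ q.last = p.last ∧ q.length ≤ p.length := by
  induction p using RelSeries.inductionOn' with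
  | singleton x => exact ⟨singleton r x, rfl, rfl, le_rfl⟩
  | snoc p x hx ih =>
    obtain ⟨q, hq₀, hq₁, hq⟩ := ih
    rcases hx with rfl | hx
    · exact ⟨q, by simp [hq₀], by simp [hq₁], by simp; omega⟩
    · exact ⟨q.snoc x (hq₁ ▸ hx), by simp [hq₀], by simp, by simp [hq]⟩

end RelSeries

namespace Subgroup

variable {G H : Type*} [Group G] [Group H]

theorem map_eq_or_covBy_map (f : G →* H) {A B : Subgroup G} (h : A ⋖ B) :
    A.map f = B.map f ∨ A.map f ⋖ B.map f := by
  refine or_iff_not_imp_left.2 fun hne => ⟨(map_mono h.1.le).lt_of_ne hne, fun C hAC hCB => ?_⟩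
  have hAD : A ≤ C.comap f ⊓ B := le_inf ((le_comap_map f A).trans (comap_mono hAC.le)) h.1.le
  have hD : (C.comap f ⊓ B).map f = C := by
    refine le_antisymm ((map_mono inf_le_left).trans (map_comap_le f C)) fun c hc => ?_
    obtain ⟨b, hb, rfl⟩ := hCB.le hc
    exact ⟨b, ⟨hc, hb⟩, rfl⟩
  rcases h.eq_or_eq hAD inf_le_right with hDA | hDB
  · exact hAC.ne' (by rw [← hD, hDA])
  · exact hCB.ne (by rw [← hD, hDB])

theorem map_subtype_covBy_map_subtype_iff {K : Subgroup G} {A B : Subgroup K} :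
    A.map K.subtype ⋖ B.map K.subtype ↔ A ⋖ B := by
  let f : Subgroup K ↪o Subgroup G :=
    (MapSubtype.orderIso K).toOrderEmbedding.trans (OrderEmbedding.subtype _)
  have hf : Set.range f = Set.Iic K := by
    simp [f, Set.range_comp, Set.Iic_def]
  exact Set.OrdConnected.apply_covBy_apply_iff f (hf ▸ Set.ordConnected_Iic)

end Subgroup

theorem QuotientGroup.comap_mk'_covBy_comap_mk'_iff {G : Type*} [Group G] (N : Subgroup G)
    [N.Normal] {A B : Subgroup (G ⧸ N)} :
    A.comap (mk' N) ⋖ B.comap (mk' N) ↔ A ⋖ B := by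
  let f : Subgroup (G ⧸ N) ↪o Subgroup G :=
    (comapMk'OrderIso N).toOrderEmbedding.trans (OrderEmbedding.subtype _)
  have hf : Set.range f = Set.Ici N := by
    simp [f, Set.range_comp, Set.Ici_def]
  exact Set.OrdConnected.apply_covBy_apply_iff f (hf ▸ Set.ordConnected_Ici)

section groupDepth

variable {G : Type*} [Group G]

theorem groupDepth_le_length (p : RelSeries {(A, B) : Subgroup G × Subgroup G | A ⋖ B})
    (h₀ : p.head = ⊥) (h₁ : p.last = ⊤) : groupDepth G ≤ p.length :=
  Nat.sInf_le ⟨p.toFun, h₀, h₁, p.step⟩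

theorem exists_relSeries_length_eq_groupDepth [Finite G] :
    ∃ p : RelSeries {(A, B) : Subgroup G × Subgroup G | A ⋖ B},
      p.head = ⊥ ∧ p.last = ⊤ ∧ p.length = groupDepth G := by
  have hne : {t | ∃ s : Fin (t + 1) → Subgroup G, IsUnrefinableChain s}.Nonempty := by
    obtain ⟨p, -, -, h₀, h₁⟩ := LTSeries.exists_relSeries_covBy_and_head_eq_bot_and_last_eq_bot
      (.singleton _ (⊥ : Subgroup G))
    exact ⟨p.length, p.toFun, h₀, h₁, p.step⟩
  obtain ⟨s, h₀, h₁, hs⟩ := Nat.sInf_mem hne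
  exact ⟨⟨_, s, hs⟩, h₀, h₁, rfl⟩

variable [Finite G] (N : Subgroup G) [N.Normal]

theorem groupDepth_quotient_le : groupDepth (G ⧸ N) ≤ groupDepth G := by
  obtain ⟨p, hp₀, hp₁, hp⟩ := exists_relSeries_length_eq_groupDepth (G := G)
  obtain ⟨q, hq₀, hq₁, hq⟩ := RelSeries.exists_length_le_of_eq_or_rel
    (r := {(A, B) : Subgroup (G ⧸ N) × Subgroup (G ⧸ N) | A ⋖ B})
    (p.map ⟨Subgroup.map (QuotientGroup.mk' N), fun h => Subgroup.map_eq_or_covBy_map _ h⟩)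
  calc groupDepth (G ⧸ N) ≤ q.length := groupDepth_le_length q (by simp [hq₀, hp₀])
          (by simp [hq₁, hp₁, Subgroup.map_top_of_surjective _ (QuotientGroup.mk'_surjective N)])
    _ ≤ groupDepth G := by simpa [hp] using hq

theorem groupDepth_le_add : groupDepth G ≤ groupDepth N + groupDepth (G ⧸ N) := by
  obtain ⟨p, hp₀, hp₁, hp⟩ := exists_relSeries_length_eq_groupDepth (G := N)
  obtain ⟨q, hq₀, hq₁, hq⟩ := exists_relSeries_length_eq_groupDepth (G := G ⧸ N)
  let p' : RelSeries {(A, B) : Subgroup G × Subgroup G | A ⋖ B} :=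
    p.map ⟨Subgroup.map N.subtype, fun h => Subgroup.map_subtype_covBy_map_subtype_iff.2 h⟩
  let q' : RelSeries {(A, B) : Subgroup G × Subgroup G | A ⋖ B} :=
    q.map ⟨Subgroup.comap (QuotientGroup.mk' N),
      fun h => (QuotientGroup.comap_mk'_covBy_comap_mk'_iff N).2 h⟩
  have hjoin : p'.last = q'.head := by
    simp [p', q', hp₁, hq₀, ← MonoidHom.range_eq_map]
  calc groupDepth G ≤ (p'.smash q' hjoin).length :=
        groupDepth_le_length _ (by simp [p', hp₀]) (by simp [q', hq₁])
    _ = groupDepth N + groupDepth (G ⧸ N) := by simp [p', q', hp, hq]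

end groupDepth

/-- `λ(G/N) ≤ λ(G) ≤ λ(N) + λ(G/N)`. -/
theorem depth_quotient_le_and_depth_le (G : Type*) [Group G] [Finite G]
    (N : Subgroup G) [N.Normal] :
    groupDepth (G ⧸ N) ≤ groupDepth G ∧
      groupDepth G ≤ groupDepth N + groupDepth (G ⧸ N) :=
  ⟨groupDepth_quotient_le N, groupDepth_le_add N⟩
end

section
/- If G is a finite group, B is a subgroup of G, and A is a normal subgroup of B, then the chain difference of G is at least the chain difference of B/A plus the chain difference of A. In particular, cd(G) ≥ cd(L) for every section L of G. -/
/-!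
Fix an unrefinable chain from `B` up to `G`, of length `k`. An unrefinable chain of `A` of length
`a` is an unrefinable chain from `1` to `A` in `B`, and by the correspondence theorem an
unrefinable chain of `B/A` of length `q` is one from `A` to `B`; concatenating gives an unrefinable
chain of `G` of length `a + q + k`. Hence `l(G) ≥ l(A) + l(B/A) + k` and
`λ(G) ≤ λ(A) + λ(B/A) + k`, and subtracting gives the claim.
-/

open Subgroup QuotientGroup

section CovByChain

variable {α β : Type*} [PartialOrder α] [PartialOrder β]

def HasCovByChain (x y : α) (t : ℕ) : Prop :=
  ∃ c : RelSeries {p : α × α | p.1 ⋖ p.2}, c.head = x ∧ c.last = y ∧ c.length = t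

lemma HasCovByChain.trans {x y z : α} {m n : ℕ} (hxy : HasCovByChain x y m)
    (hyz : HasCovByChain y z n) : HasCovByChain x z (m + n) := by
  obtain ⟨c, rfl, rfl, rfl⟩ := hxy
  obtain ⟨d, hd, rfl, rfl⟩ := hyz
  exact ⟨c.smash d hd.symm, by simp, by simp, by simp⟩

lemma exists_hasCovByChain [Finite α] {x y : α} (hxy : x ≤ y) : ∃ t, HasCovByChain x y t := by
  induction x using WellFoundedGT.induction with
  | _ x ih =>
    rcases hxy.eq_or_lt with rfl | hlt
    · exact ⟨0, RelSeries.singleton _ x, rfl, rfl, rfl⟩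
    · obtain ⟨z, hxz, hzy⟩ := exists_covBy_le_of_lt hlt
      obtain ⟨t, c, rfl, rfl, rfl⟩ := ih z hxz.lt hzy
      exact ⟨_, c.cons x hxz, rfl, by simp, rfl⟩

lemma bddAbove_setOf_hasCovByChain [Finite α] (x y : α) :
    BddAbove {t | HasCovByChain x y t} := by
  refine ⟨Nat.card α, fun t ⟨c, _, _, hct⟩ => ?_⟩
  have hc : StrictMono c.toFun := Fin.strictMono_iff_lt_succ.2 fun i => (c.step i).lt
  have hcard := Nat.card_le_card_of_injective c.toFun hc.injective
  rw [Nat.card_fin] at hcard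
  omega

lemma HasCovByChain.map_orderIso_subtype {p : β → Prop} (hp : {b | p b}.OrdConnected)
    (e : α ≃o Subtype p) {x y : α} {t : ℕ} (h : HasCovByChain x y t) :
    HasCovByChain (e x : β) (e y) t := by
  let f : α ↪o β := e.toOrderEmbedding.trans (OrderEmbedding.subtype p)
  have hf : Set.range f = {b | p b} := by
    simp [f, Set.range_comp, e.surjective.range_eq, Subtype.range_coe_subtype]
  obtain ⟨c, rfl, rfl, rfl⟩ := h
  exact ⟨c.map ⟨f, ((hf ▸ hp).apply_covBy_apply_iff f).2⟩, rfl, rfl, rfl⟩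

end CovByChain

section Subgroups

variable {G : Type*} [Group G]

lemma HasCovByChain.map_subtype {B : Subgroup G} {H K : Subgroup B} {t : ℕ}
    (h : HasCovByChain H K t) : HasCovByChain (H.map B.subtype) (K.map B.subtype) t :=
  h.map_orderIso_subtype Set.ordConnected_Iic (MapSubtype.orderIso B)

lemma HasCovByChain.comap_mk' (N : Subgroup G) [N.Normal] {H K : Subgroup (G ⧸ N)} {t : ℕ}
    (h : HasCovByChain H K t) : HasCovByChain (H.comap (mk' N)) (K.comap (mk' N)) t :=
  h.map_orderIso_subtype Set.ordConnected_Ici (comapMk'OrderIso N)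

lemma HasCovByChain.map_subtype_bot_top {B : Subgroup G} {t : ℕ}
    (h : HasCovByChain (⊥ : Subgroup B) ⊤ t) : HasCovByChain ⊥ B t := by
  simpa [Subgroup.map_bot, ← MonoidHom.range_eq_map, range_subtype] using h.map_subtype

lemma hasCovByChain_bot_top_of_normal (N : Subgroup G) [N.Normal] {a q : ℕ}
    (hN : HasCovByChain (⊥ : Subgroup N) ⊤ a) (hQ : HasCovByChain (⊥ : Subgroup (G ⧸ N)) ⊤ q) :
    HasCovByChain (⊥ : Subgroup G) ⊤ (a + q) := by
  have hNQ := hQ.comap_mk' N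
  rw [MonoidHom.comap_bot, ker_mk', comap_top] at hNQ
  exact hN.map_subtype_bot_top.trans hNQ

lemma setOf_isUnrefinableChain_eq :
    {t | ∃ s : Fin (t + 1) → Subgroup G, IsUnrefinableChain s} =
      {t | HasCovByChain (⊥ : Subgroup G) ⊤ t} := by
  ext t
  constructor
  · rintro ⟨s, h0, h1, h2⟩
    exact ⟨⟨t, s, h2⟩, h0, h1, rfl⟩
  · rintro ⟨c, h0, h1, rfl⟩
    exact ⟨c.toFun, h0, h1, c.step⟩

lemma groupDepth_le {t : ℕ} (h : HasCovByChain (⊥ : Subgroup G) ⊤ t) : groupDepth G ≤ t := by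
  rw [groupDepth, setOf_isUnrefinableChain_eq]
  exact Nat.sInf_le h

variable [Finite G]

lemma hasCovByChain_groupDepth : HasCovByChain (⊥ : Subgroup G) ⊤ (groupDepth G) := by
  rw [groupDepth, setOf_isUnrefinableChain_eq]
  exact Nat.sInf_mem (exists_hasCovByChain le_top)

lemma hasCovByChain_groupLength : HasCovByChain (⊥ : Subgroup G) ⊤ (groupLength G) := by
  rw [groupLength, setOf_isUnrefinableChain_eq]
  exact Nat.sSup_mem (exists_hasCovByChain le_top) (bddAbove_setOf_hasCovByChain _ _)

lemma le_groupLength {t : ℕ} (h : HasCovByChain (⊥ : Subgroup G) ⊤ t) : t ≤ groupLength G := by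
  rw [groupLength, setOf_isUnrefinableChain_eq]
  exact le_csSup (bddAbove_setOf_hasCovByChain _ _) h

lemma groupDepth_le_groupLength : groupDepth G ≤ groupLength G :=
  groupDepth_le hasCovByChain_groupLength

end Subgroups

/-- `cd(G) ≥ cd(B/A) + cd(A)` for `A ⊴ B ≤ G`.
In particular `cd(G) ≥ cd(L)` for every section `L` of `G`. -/
theorem chainDiff_ge_section (G : Type*) [Group G] [Finite G]
    (B : Subgroup G) (A : Subgroup B) [A.Normal] :
    chainDiff (B ⧸ A) + chainDiff A ≤ chainDiff G := by
  obtain ⟨k, hk⟩ := exists_hasCovByChain (le_top : B ≤ ⊤)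
  have hG {a q : ℕ} (hA : HasCovByChain (⊥ : Subgroup A) ⊤ a)
      (hQ : HasCovByChain (⊥ : Subgroup (B ⧸ A)) ⊤ q) :
      HasCovByChain (⊥ : Subgroup G) ⊤ (a + q + k) :=
    (hasCovByChain_bot_top_of_normal A hA hQ).map_subtype_bot_top.trans hk
  have hl := le_groupLength (hG hasCovByChain_groupLength hasCovByChain_groupLength)
  have hd := groupDepth_le (hG hasCovByChain_groupDepth hasCovByChain_groupDepth)
  have hA := groupDepth_le_groupLength (G := A)
  have hQ := groupDepth_le_groupLength (G := B ⧸ A)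
  unfold chainDiff
  omega
end
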